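/- Let α ∈ ℝ with α > -1/2 and define P_n(z) = Σ_{k=0}^{n/2} n^{2k} / (4^k Γ(k+1) Γ(k+α+1)) · z^k for even n. Then every zero of P_n satisfies |z| ≤ 1 + 2α/n. -/

import Mathlib

/-!
Eneström–Kakeya: if `0 < a₀ ≤ a₁ ≤ ⋯ ≤ aₘ`, then multiplying `∑ aₖ wᵏ` by `w - 1` expresses
`aₘ wᵐ⁺¹` as `a₀ + ∑ (aₖ₊₁ - aₖ) wᵏ⁺¹`, a combination of powers with nonnegative weights summing
to `aₘ`; for `‖w‖ > 1` its norm is then at most `aₘ ‖w‖ᵐ < ‖aₘ wᵐ⁺¹‖`, so zeros lie in the unit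
disc. Rescaling `z = βw` turns ratio bounds `aₖ ≤ β aₖ₊₁` into the radius `β`. For the Bessel
section coefficients, `aₖ / aₖ₊₁ = 4(k+1)(k+α+1)/n²`, which for `k + 1 ≤ n/2` is at most
`4 (n/2) (n/2 + α) / n² = 1 + 2α/n`.
-/

open Finset Complex

theorem sub_one_mul_sum_range_succ {R : Type*} [CommRing R] (a : ℕ → R) (w : R) (m : ℕ) :
    (w - 1) * ∑ k ∈ range (m + 1), a k * w ^ k =
      a m * w ^ (m + 1) - a 0 - ∑ k ∈ range m, (a (k + 1) - a k) * w ^ (k + 1) := by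
  induction m with
  | zero => simp only [zero_add, sum_range_one, range_zero, sum_empty]; ring
  | succ m ih =>
    rw [sum_range_succ, mul_add, ih, sum_range_succ]
    ring

theorem add_sum_sub_mul_pow_le {a : ℕ → ℝ} {m : ℕ} {A : ℝ} (hA : 1 ≤ A) (h0 : 0 ≤ a 0)
    (hmono : ∀ k < m, a k ≤ a (k + 1)) :
    a 0 + ∑ k ∈ range m, (a (k + 1) - a k) * A ^ (k + 1) ≤ a m * A ^ m := by
  calc a 0 + ∑ k ∈ range m, (a (k + 1) - a k) * A ^ (k + 1)
      ≤ a 0 * A ^ m + ∑ k ∈ range m, (a (k + 1) - a k) * A ^ m := by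
        refine add_le_add (le_mul_of_one_le_right h0 (one_le_pow₀ hA))
          (sum_le_sum fun k hk => ?_)
        have hk : k < m := mem_range.mp hk
        exact mul_le_mul_of_nonneg_left (pow_le_pow_right₀ hA hk) (sub_nonneg.mpr (hmono k hk))
    _ = a m * A ^ m := by rw [← sum_mul, sum_range_sub a]; ring

section EnestromKakeya

variable {𝕜 : Type*} [RCLike 𝕜]

theorem norm_le_one_of_sum_eq_zero_of_monotone {a : ℕ → ℝ} {m : ℕ} (h0 : 0 < a 0)
    (hmono : ∀ k < m, a k ≤ a (k + 1)) {w : 𝕜}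
    (hw : ∑ k ∈ range (m + 1), (a k : 𝕜) * w ^ k = 0) : ‖w‖ ≤ 1 := by
  by_contra! hA
  have ham : 0 < a m := by
    have hinc : 0 ≤ ∑ k ∈ range m, (a (k + 1) - a k) :=
      sum_nonneg fun k hk => sub_nonneg.mpr (hmono k (mem_range.mp hk))
    rw [sum_range_sub a] at hinc
    linarith
  have htop : (a m : 𝕜) * w ^ (m + 1) =
      a 0 + ∑ k ∈ range m, ((a (k + 1) - a k : ℝ) : 𝕜) * w ^ (k + 1) := by
    have h := sub_one_mul_sum_range_succ (fun k => (a k : 𝕜)) w m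
    rw [hw, mul_zero] at h
    push_cast
    linear_combination -h
  have hnorm : a m * ‖w‖ ^ (m + 1) ≤
      a 0 + ∑ k ∈ range m, (a (k + 1) - a k) * ‖w‖ ^ (k + 1) := by
    calc a m * ‖w‖ ^ (m + 1) = ‖(a m : 𝕜) * w ^ (m + 1)‖ := by
          rw [norm_mul, norm_pow, RCLike.norm_ofReal, abs_of_pos ham]
      _ ≤ ‖(a 0 : 𝕜)‖ + ∑ k ∈ range m, ‖((a (k + 1) - a k : ℝ) : 𝕜) * w ^ (k + 1)‖ := by
          rw [htop]
          exact (norm_add_le _ _).trans (add_le_add le_rfl (norm_sum_le _ _))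
      _ = a 0 + ∑ k ∈ range m, (a (k + 1) - a k) * ‖w‖ ^ (k + 1) := by
          rw [RCLike.norm_ofReal, abs_of_pos h0]
          refine congrArg _ (sum_congr rfl fun k hk => ?_)
          rw [norm_mul, norm_pow, RCLike.norm_ofReal,
            abs_of_nonneg (sub_nonneg.mpr (hmono k (mem_range.mp hk)))]
  have hlt : a m * ‖w‖ ^ m < a m * ‖w‖ ^ (m + 1) :=
    mul_lt_mul_of_pos_left (pow_lt_pow_right₀ hA m.lt_succ_self) ham
  linarith [add_sum_sub_mul_pow_le hA.le h0.le hmono]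

theorem norm_le_of_sum_eq_zero_of_le_mul {a : ℕ → ℝ} {m : ℕ} {β : ℝ} (hβ : 0 < β)
    (h0 : 0 < a 0) (hratio : ∀ k < m, a k ≤ β * a (k + 1)) {z : 𝕜}
    (hz : ∑ k ∈ range (m + 1), (a k : 𝕜) * z ^ k = 0) : ‖z‖ ≤ β := by
  have hβ' : (β : 𝕜) ≠ 0 := RCLike.ofReal_ne_zero.mpr hβ.ne'
  have hw : ∑ k ∈ range (m + 1), ((a k * β ^ k : ℝ) : 𝕜) * (z / β) ^ k = 0 := by
    rw [← hz]
    refine sum_congr rfl fun k _ => ?_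
    push_cast
    rw [div_pow, mul_assoc, mul_div_cancel₀ _ (pow_ne_zero k hβ')]
  have hmono : ∀ k < m, a k * β ^ k ≤ a (k + 1) * β ^ (k + 1) := fun k hk => by
    rw [pow_succ, mul_comm (β ^ k), ← mul_assoc, mul_comm (a (k + 1))]
    exact mul_le_mul_of_nonneg_right (hratio k hk) (pow_nonneg hβ.le k)
  have h := norm_le_one_of_sum_eq_zero_of_monotone (by simpa using h0) hmono hw
  rwa [norm_div, RCLike.norm_ofReal, abs_of_pos hβ, div_le_one hβ] at h

end EnestromKakeya

noncomputable def besselSectionCoeff (α : ℝ) (n k : ℕ) : ℝ :=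
  (n : ℝ) ^ (2 * k) / (4 ^ k * k.factorial * Real.Gamma (k + α + 1))

section BesselSectionCoeff

variable {α : ℝ} {n : ℕ}

theorem natCast_add_add_one_pos (hα : -1 < α) (k : ℕ) : 0 < (k : ℝ) + α + 1 := by
  linarith [k.cast_nonneg (α := ℝ)]

theorem besselSectionCoeff_pos (hα : -1 < α) (hn : 0 < n) (k : ℕ) :
    0 < besselSectionCoeff α n k := by
  have hΓ : 0 < Real.Gamma (k + α + 1) := Real.Gamma_pos_of_pos (natCast_add_add_one_pos hα k)
  unfold besselSectionCoeff
  positivity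

theorem besselSectionCoeff_zero_pos (hα : -1 < α) : 0 < besselSectionCoeff α n 0 := by
  simpa [besselSectionCoeff] using Real.Gamma_pos_of_pos (natCast_add_add_one_pos hα 0)

theorem besselSectionCoeff_succ_mul (hα : -1 < α) (k : ℕ) :
    besselSectionCoeff α n (k + 1) * (4 * (k + 1) * (k + α + 1)) =
      besselSectionCoeff α n k * n ^ 2 := by
  have hkα : (k : ℝ) + α + 1 ≠ 0 := (natCast_add_add_one_pos hα k).ne'
  have hΓ : Real.Gamma ((k + 1 : ℕ) + α + 1) = (k + α + 1) * Real.Gamma (k + α + 1) := by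
    rw [← Real.Gamma_add_one hkα]
    push_cast
    ring_nf
  have hΓ0 : Real.Gamma (k + α + 1) ≠ 0 :=
    (Real.Gamma_pos_of_pos (natCast_add_add_one_pos hα k)).ne'
  unfold besselSectionCoeff
  rw [hΓ, Nat.factorial_succ]
  push_cast
  field_simp
  ring

theorem besselSectionCoeff_le_mul_succ (hα : -1 < α) {k : ℕ} (hk : 2 * (k + 1) ≤ n) :
    besselSectionCoeff α n k ≤ (1 + 2 * α / n) * besselSectionCoeff α n (k + 1) := by
  have hn : (0 : ℝ) < n := by norm_cast; omega
  have hkn : 2 * ((k : ℝ) + 1) ≤ n := by exact_mod_cast hk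
  have hkα := natCast_add_add_one_pos hα k
  have hquad : 4 * ((k : ℝ) + 1) * (k + α + 1) ≤ (1 + 2 * α / n) * n ^ 2 := by
    have hβn : (1 + 2 * α / n) * (n : ℝ) ^ 2 = 4 * (n / 2) * (n / 2 + α) := by
      field_simp
      ring
    rw [hβn]
    have := mul_le_mul (show (k : ℝ) + 1 ≤ n / 2 by linarith)
      (show (k : ℝ) + α + 1 ≤ n / 2 + α by linarith) hkα.le (by linarith)
    linarith
  have hpos := besselSectionCoeff_pos (n := n) hα (by omega) (k + 1)
  refine le_of_mul_le_mul_right ?_ (pow_pos hn 2)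
  calc besselSectionCoeff α n k * n ^ 2
      = besselSectionCoeff α n (k + 1) * (4 * (k + 1) * (k + α + 1)) :=
        (besselSectionCoeff_succ_mul hα k).symm
    _ ≤ besselSectionCoeff α n (k + 1) * ((1 + 2 * α / n) * n ^ 2) :=
        mul_le_mul_of_nonneg_left hquad hpos.le
    _ = (1 + 2 * α / n) * besselSectionCoeff α n (k + 1) * n ^ 2 := by ring

end BesselSectionCoeff

theorem bessel_section_polynomial_zero_bound_general
    (α : ℝ) (hα : -(1 / 2) < α)
    (n : ℕ)
    (P : ℂ → ℂ)
    (hP : ∀ z : ℂ, P z = ∑ k ∈ range (n / 2 + 1),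
      (n : ℂ) ^ (2 * k) /
        (4 ^ k * (k.factorial : ℂ) * (Real.Gamma (k + α + 1) : ℂ)) * z ^ k) :
    ∀ z : ℂ, P z = 0 → ‖z‖ ≤ 1 + 2 * α / n := by
  intro z hz
  have hα1 : -1 < α := by linarith
  have hβ : 0 < 1 + 2 * α / n := by
    rcases n.eq_zero_or_pos with rfl | hn
    · simp
    · have : (1 : ℝ) ≤ n := by exact_mod_cast hn
      rw [one_add_div (by positivity)]
      exact div_pos (by linarith) (by positivity)
  refine norm_le_of_sum_eq_zero_of_le_mul (m := n / 2) hβ (besselSectionCoeff_zero_pos hα1)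
    (fun k hk => besselSectionCoeff_le_mul_succ hα1 (by omega)) ?_
  rw [← hz, hP]
  refine sum_congr rfl fun k _ => ?_
  simp [besselSectionCoeff]

/-- Zeros of the polynomials `P_n` arising from even sections of Bessel functions
lie in `|z| ≤ 1 + 2α/n`. -/
theorem bessel_section_polynomial_zero_bound
    (α : ℝ) (hα : -(1 / 2) < α)
    (n : ℕ) (hn : Even n) (hn0 : 0 < n)
    (P : ℂ → ℂ)
    (hP : ∀ z : ℂ, P z = ∑ k ∈ range (n / 2 + 1),
      (n : ℂ) ^ (2 * k) /
        (4 ^ k * (k.factorial : ℂ) * (Real.Gamma (k + α + 1) : ℂ)) * z ^ k) :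
    ∀ z : ℂ, P z = 0 → ‖z‖ ≤ 1 + 2 * α / n :=
  bessel_section_polynomial_zero_bound_general α hα n P hP
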